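/- (Main theorem) Let g : ℝ → ℝ be continuously differentiable (g ∈ C¹) with a countable set of critical points {x : g'(x) = 0}. Let x₁, …, x_N ∈ ℝⁿ be linearly independent input vectors (so n ≥ N). Define, for weights w₁,…,w_N ∈ ℝⁿ and biases b₁,…,b_N ∈ ℝ, the N×N matrix H with entries H j i = g(wᵢ·xⱼ + bᵢ). Then the set W = {(w₁,b₁,…,w_N,b_N) ∈ ℝ^{N(n+1)} : H is not invertible} has empty interior in ℝ^{N(n+1)}. -/

import Mathlib

open Matrix

lemma exists_dual_vec {n N : ℕ} (x : Fin N → Fin n → ℝ) (hx : LinearIndependent ℝ x)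
    (c : Fin N → ℝ) : ∃ w : Fin n → ℝ, ∀ j, w ⬝ᵥ x j = c j := by
  classical
  let B := Module.Basis.span hx
  obtain ⟨f, hf⟩ := LinearMap.exists_extend ((B.constr ℝ) c)
  refine ⟨fun k => f (fun m => if k = m then 1 else 0), fun j => ?_⟩
  have h1 : f (x j) = c j := by
    have hB : (B j : Fin n → ℝ) = x j := Module.Basis.coe_span_apply hx j
    have h2 := LinearMap.congr_fun hf (B j)
    simp only [LinearMap.comp_apply, Submodule.subtype_apply, Module.Basis.constr_basis] at h2
    rwa [hB] at h2
  rw [← h1, LinearMap.pi_apply_eq_sum_univ f (x j)]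
  simp [dotProduct, mul_comm]

lemma lemB (g : ℝ → ℝ) (hcrit : {x : ℝ | deriv g x = 0}.Countable)
    {a δ C K : ℝ} (hδ : 0 < δ) (hC : C ≠ 0)
    (h : ∀ s ∈ Metric.ball a δ, C * g s + K = 0) : False := by
  have hg : ∀ s ∈ Metric.ball a δ, g s = -K / C := by
    intro s hs
    have := h s hs
    field_simp
    linarith
  have hsub : Metric.ball a δ ⊆ {x : ℝ | deriv g x = 0} := by
    intro s hs
    have : deriv g s = deriv (fun _ : ℝ => -K / C) s := by
      apply Filter.EventuallyEq.deriv_eq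
      filter_upwards [Metric.isOpen_ball.eventually_mem hs] with y hy
      exact hg y hy
    simpa using this
  have hcnt : (Metric.ball a δ).Countable := hcrit.mono hsub
  have hzero := hcnt.measure_zero (MeasureTheory.volume)
  rw [Real.volume_ball] at hzero
  rw [ENNReal.ofReal_eq_zero] at hzero
  linarith

lemma aux (g : ℝ → ℝ) (hcrit : {x : ℝ | deriv g x = 0}.Countable) (n : ℕ) :
    ∀ (N : ℕ) (x : Fin N → Fin n → ℝ), LinearIndependent ℝ x →
    ∀ (U : Set ((Fin N → Fin n → ℝ) × (Fin N → ℝ))), IsOpen U → U.Nonempty →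
    ¬ (∀ p ∈ U, det (of fun j i => g (p.1 i ⬝ᵥ x j + p.2 i) : Matrix (Fin N) (Fin N) ℝ) = 0) := by
  intro N
  induction N with
  | zero =>
    rintro x hx U hU ⟨p₀, hp₀⟩ h
    have := h p₀ hp₀
    simp [Matrix.det_fin_zero] at this
  | succ N ih =>
    rintro x hx U hU ⟨p₀, hp₀⟩ hdet
    classical
    -- the reindexing map
    set ι : ((Fin N → Fin n → ℝ) × (Fin N → ℝ)) × ((Fin n → ℝ) × ℝ) →
        (Fin (N+1) → Fin n → ℝ) × (Fin (N+1) → ℝ) :=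
      fun qu => (Fin.snoc qu.1.1 qu.2.1, Fin.snoc qu.1.2 qu.2.2) with hιdef
    have hι : Continuous ι := by
      apply Continuous.prodMk
      · have : (fun qu : ((Fin N → Fin n → ℝ) × (Fin N → ℝ)) × ((Fin n → ℝ) × ℝ) =>
            Fin.snoc qu.1.1 qu.2.1) = fun qu =>
            Fin.insertNth (α := fun _ => (Fin n → ℝ)) (Fin.last N) qu.2.1 qu.1.1 := by
          funext qu; rw [Fin.insertNth_last']
        rw [this]
        exact Continuous.finInsertNth (A := fun _ => (Fin n → ℝ)) (Fin.last N)
          (continuous_fst.comp continuous_snd) (continuous_fst.comp continuous_fst)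
      · have : (fun qu : ((Fin N → Fin n → ℝ) × (Fin N → ℝ)) × ((Fin n → ℝ) × ℝ) =>
            Fin.snoc qu.1.2 qu.2.2) = fun qu =>
            Fin.insertNth (α := fun _ => ℝ) (Fin.last N) qu.2.2 qu.1.2 := by
          funext qu; rw [Fin.insertNth_last']
        rw [this]
        exact Continuous.finInsertNth (A := fun _ => ℝ) (Fin.last N)
          (continuous_snd.comp continuous_snd) (continuous_snd.comp continuous_fst)
    set q₀ : (Fin N → Fin n → ℝ) × (Fin N → ℝ) := (Fin.init p₀.1, Fin.init p₀.2) with hq₀def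
    set u₀ : (Fin n → ℝ) × ℝ := (p₀.1 (Fin.last N), p₀.2 (Fin.last N)) with hu₀def
    have hι₀ : ι (q₀, u₀) = p₀ := by
      simp only [hιdef, hq₀def, hu₀def, Fin.snoc_init_self]
    have hU' : IsOpen (ι ⁻¹' U) := hU.preimage hι
    have hmem : (q₀, u₀) ∈ ι ⁻¹' U := by
      simp only [Set.mem_preimage, hι₀]; exact hp₀
    obtain ⟨V, W, hV, hW, hq₀V, hu₀W, hVW⟩ := isOpen_prod_iff.mp hU' q₀ u₀ hmem
    by_cases hall : ∀ q ∈ V,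
        det (of fun j i => g (q.1 i ⬝ᵥ x (Fin.castSucc j) + q.2 i) : Matrix (Fin N) (Fin N) ℝ) = 0
    · exact ih (fun j => x (Fin.castSucc j))
        (hx.comp Fin.castSucc (Fin.castSucc_injective N)) V hV ⟨q₀, hq₀V⟩ hall
    · push_neg at hall
      obtain ⟨q₁, hq₁V, hq₁⟩ := hall
      set c : Fin (N+1) → ℝ := fun j => (-1 : ℝ) ^ ((j : ℕ) + N) *
        det (of (fun j' i => g (q₁.1 i ⬝ᵥ x (j.succAbove j') + q₁.2 i)) :
          Matrix (Fin N) (Fin N) ℝ) with hcdef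
      have hclast : c (Fin.last N) ≠ 0 := by
        have hpow : ((-1 : ℝ)) ^ (N + N) = 1 := by
          rw [pow_add]; rcases neg_one_pow_eq_or ℝ N with h | h <;> rw [h] <;> ring
        simp only [hcdef, Fin.val_last, hpow, one_mul, Fin.succAbove_last]
        exact hq₁
      -- the key sum identity on W
      have hW0 : ∀ u ∈ W, ∑ j : Fin (N+1), c j * g (u.1 ⬝ᵥ x j + u.2) = 0 := by
        intro u huW
        have hpU : ι (q₁, u) ∈ U := hVW (Set.mk_mem_prod hq₁V huW)
        have h0 := hdet _ hpU
        rw [det_succ_column _ (Fin.last N)] at h0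
        rw [← h0]
        have hsub : ∀ j : Fin (N+1),
            (of fun j i => g ((ι (q₁, u)).1 i ⬝ᵥ x j + (ι (q₁, u)).2 i) :
              Matrix (Fin (N+1)) (Fin (N+1)) ℝ).submatrix j.succAbove
                ((Fin.last N).succAbove) =
            (of (fun j' i => g (q₁.1 i ⬝ᵥ x (j.succAbove j') + q₁.2 i)) :
              Matrix (Fin N) (Fin N) ℝ) := by
          intro j
          ext j' i
          simp [hιdef, Fin.succAbove_last, Fin.snoc_castSucc]
        apply Finset.sum_congr rfl
        intro j _
        rw [hsub j]
        simp only [hcdef, of_apply, Fin.snoc_last, Fin.val_last, hιdef]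
        ring
      obtain ⟨δ, hδ, hball⟩ := Metric.isOpen_iff.mp hW u₀ hu₀W
      obtain ⟨v, hv⟩ := exists_dual_vec x hx (fun j => if j = Fin.last N then 1 else 0)
      set t₁ : Fin (N+1) → ℝ := fun j => u₀.1 ⬝ᵥ x j + u₀.2 with ht₁def
      set δ' : ℝ := δ / (‖v‖ + 1) with hδ'def
      have hnv : (0:ℝ) < ‖v‖ + 1 := by positivity
      have hδ' : 0 < δ' := div_pos hδ hnv
      have key : ∀ s ∈ Metric.ball (t₁ (Fin.last N)) δ',
          c (Fin.last N) * g s + ∑ j : Fin N, c (Fin.castSucc j) * g (t₁ (Fin.castSucc j)) = 0 := by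
        intro s hs
        set u : (Fin n → ℝ) × ℝ := (u₀.1 + (s - t₁ (Fin.last N)) • v, u₀.2) with hudef
        have huW : u ∈ W := by
          apply hball
          rw [Metric.mem_ball, hudef, Prod.dist_eq]
          simp only [dist_self]
          have : dist (u₀.1 + (s - t₁ (Fin.last N)) • v) u₀.1 = ‖(s - t₁ (Fin.last N)) • v‖ := by
            rw [dist_eq_norm]; ring_nf
          rw [max_lt_iff]
          constructor
          · rw [this, norm_smul]
            calc ‖s - t₁ (Fin.last N)‖ * ‖v‖ < δ' * (‖v‖ + 1) := by
                  apply mul_lt_mul' ?_ ?_ (norm_nonneg _) hδ'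
                  · exact le_of_lt (by simpa [Real.norm_eq_abs, Real.dist_eq] using hs)
                  · linarith [norm_nonneg v]
              _ = δ := by rw [hδ'def]; field_simp
          · exact hδ
        have harg : ∀ j, u.1 ⬝ᵥ x j + u.2 = if j = Fin.last N then s else t₁ j := by
          intro j
          rw [hudef]
          simp only [add_dotProduct, smul_dotProduct, hv j, smul_eq_mul]
          rcases eq_or_ne j (Fin.last N) with rfl | hj
          · simp [ht₁def]; ring
          · simp [hj, ht₁def]
        have hsum0 := hW0 u huW
        rw [Fin.sum_univ_castSucc] at hsum0
        have e2 : u.1 ⬝ᵥ x (Fin.last N) + u.2 = s := by rw [harg]; simp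
        have hsum : ∑ j : Fin N, c (Fin.castSucc j) * g (u.1 ⬝ᵥ x (Fin.castSucc j) + u.2)
            = ∑ j : Fin N, c (Fin.castSucc j) * g (t₁ (Fin.castSucc j)) := by
          apply Finset.sum_congr rfl
          intro j _
          rw [harg]
          simp [(Fin.castSucc_lt_last j).ne]
        rw [e2] at hsum0
        linarith [hsum0, hsum]
      exact lemB g hcrit hδ' hclast key

theorem stmt_13 (n N : ℕ) (g : ℝ → ℝ) (hg : ContDiff ℝ 1 g)
    (hcrit : {x : ℝ | deriv g x = 0}.Countable)
    (x : Fin N → Fin n → ℝ) (hx : LinearIndependent ℝ x) :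
    interior {p : (Fin N → Fin n → ℝ) × (Fin N → ℝ) |
      ¬ IsUnit (Matrix.of fun j i => g (p.1 i ⬝ᵥ x j + p.2 i) : Matrix (Fin N) (Fin N) ℝ)} = ∅ := by
  by_contra hne
  obtain ⟨p₀, hp₀⟩ := Set.nonempty_iff_ne_empty.mpr hne
  apply aux g hcrit n N x hx _ isOpen_interior ⟨p₀, hp₀⟩
  intro p hp
  have hp' := interior_subset hp
  by_contra hd
  exact hp' ((Matrix.isUnit_iff_isUnit_det _).mpr (isUnit_iff_ne_zero.mpr hd))
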